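/- arXiv:2403.16372 — 7 statements merged into one kernel-verified Lean document; each statement's English description precedes it below -/
import Mathlib

section
/- For all p ∈ (0,1) and all real t, (1-p)·exp(-t·p) + p·exp(t·(1-p)) ≤ exp( ((1-2p) / (4·ln((1-p)/p))) · t² ), where for p = 1/2 the coefficient (1-2p)/(4·ln((1-p)/p)) is interpreted as its limit 1/8. -/
/-!
For `p ≠ 1/2` put `b = log ((1 - p) / p) / 2`, so that `tanh b = 1 - 2p`. With `s = t/2` the
moment generating function equals `exp (s tanh b) cosh (b - s) / cosh b`, and taking logarithms
the inequality becomes `log cosh x - c x² ≤ log cosh b - c b²` at `x = b - s`, where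
`c = tanh b / (2b)`. The derivative of the left side is `x (tanh x / x - tanh b / b)` and
`tanh x / x` decreases on `(0, ∞)`, so this even function of `x` is maximal at `x = ± b`.
For `p = 1/2` the claim is `cosh (t/2) ≤ exp (t²/8)`.
-/

/-- The Kearns–Saul coefficient, with the removable singularity at `p = 1/2`
    filled in by its limit `1/8`. -/
noncomputable def kearnsSaulCoeff (p : ℝ) : ℝ :=
  if p = 1/2 then 1/8 else (1 - 2*p) / (4 * Real.log ((1 - p) / p))

open Set

namespace Real

lemma hasDerivAt_tanh (x : ℝ) : HasDerivAt tanh (cosh x ^ 2)⁻¹ x := by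
  have h := (hasDerivAt_sinh x).div (hasDerivAt_cosh x) (cosh_pos x).ne'
  rw [show tanh = sinh / cosh from funext tanh_eq_sinh_div_cosh]
  refine h.congr_deriv ?_
  rw [← sq, ← sq, cosh_sq', add_sub_cancel_right, one_div]

lemma hasDerivAt_log_cosh (x : ℝ) : HasDerivAt (fun y => log (cosh y)) (tanh x) x := by
  rw [tanh_eq_sinh_div_cosh]
  exact (hasDerivAt_cosh x).log (cosh_pos x).ne'

lemma antitoneOn_tanh_div_self : AntitoneOn (fun x => tanh x / x) (Ioi 0) := by
  have hderiv (x : ℝ) (hx : x ∈ Ioi 0) :=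
    (hasDerivAt_tanh x).div (hasDerivAt_id x) (ne_of_gt hx)
  refine antitoneOn_of_hasDerivWithinAt_nonpos (convex_Ioi 0)
    (fun x hx => (hderiv x hx).continuousAt.continuousWithinAt)
    (fun x hx => (hderiv x (interior_subset hx)).hasDerivWithinAt) fun x hx => ?_
  rw [interior_Ioi] at hx
  have hx : 0 < x := hx
  refine div_nonpos_of_nonpos_of_nonneg ?_ (sq_nonneg x)
  rw [tanh_eq_sinh_div_cosh, id, mul_one, sub_nonpos, inv_mul_eq_div,
    div_le_div_iff₀ (by positivity) (cosh_pos x)]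
  have hsinh : x ≤ sinh x * cosh x :=
    (self_le_sinh_iff.mpr hx.le).trans
      (le_mul_of_one_le_right (sinh_nonneg_iff.mpr hx.le) (one_le_cosh x))
  calc x * cosh x ≤ sinh x * cosh x * cosh x := mul_le_mul_of_nonneg_right hsinh (cosh_pos x).le
    _ = sinh x * cosh x ^ 2 := by ring

lemma log_cosh_sub_mul_sq_le_of_pos {b : ℝ} (hb : 0 < b) (x : ℝ) :
    log (cosh x) - tanh b / (2 * b) * x ^ 2 ≤ log (cosh b) - tanh b / (2 * b) * b ^ 2 := by
  set g : ℝ → ℝ := fun x => log (cosh x) - tanh b / (2 * b) * x ^ 2 with hg_def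
  have hg (x : ℝ) : HasDerivAt g (tanh x - tanh b / b * x) x := by
    refine ((hasDerivAt_log_cosh x).sub
      ((hasDerivAt_pow 2 x).const_mul (tanh b / (2 * b)))).congr_deriv ?_
    field_simp
    ring
  have hg_cont : Continuous g := continuous_iff_continuousAt.2 fun x => (hg x).continuousAt
  have hmono : MonotoneOn g (Icc 0 b) := by
    refine monotoneOn_of_hasDerivWithinAt_nonneg (convex_Icc 0 b) hg_cont.continuousOn
      (fun x _ => (hg x).hasDerivWithinAt) fun x hx => ?_
    rw [interior_Icc] at hx
    have := antitoneOn_tanh_div_self hx.1 hb hx.2.le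
    rw [div_le_div_iff₀ hb hx.1] at this
    rw [sub_nonneg, div_mul_eq_mul_div, div_le_iff₀ hb]
    linarith
  have hanti : AntitoneOn g (Ici b) := by
    refine antitoneOn_of_hasDerivWithinAt_nonpos (convex_Ici b) hg_cont.continuousOn
      (fun x _ => (hg x).hasDerivWithinAt) fun x hx => ?_
    rw [interior_Ici] at hx
    have := antitoneOn_tanh_div_self hb (hb.trans hx) hx.le
    rw [div_le_div_iff₀ (hb.trans hx) hb] at this
    rw [sub_nonpos, div_mul_eq_mul_div, le_div_iff₀ hb]
    linarith
  have hg_abs : g x = g |x| := by simp only [hg_def, cosh_abs, sq_abs]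
  change g x ≤ g b
  rw [hg_abs]
  rcases le_total |x| b with hxb | hbx
  · exact hmono ⟨abs_nonneg x, hxb⟩ ⟨hb.le, le_rfl⟩ hxb
  · exact hanti (mem_Ici.2 le_rfl) hbx hbx

lemma log_cosh_sub_mul_sq_le {b : ℝ} (hb : b ≠ 0) (x : ℝ) :
    log (cosh x) - tanh b / (2 * b) * x ^ 2 ≤ log (cosh b) - tanh b / (2 * b) * b ^ 2 := by
  rcases hb.lt_or_gt with hb | hb
  · have h := log_cosh_sub_mul_sq_le_of_pos (neg_pos.2 hb) x
    rwa [tanh_neg, cosh_neg, neg_sq, mul_neg, neg_div_neg_eq] at h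
  · exact log_cosh_sub_mul_sq_le_of_pos hb x

lemma exp_mul_tanh_mul_cosh_sub_div_cosh_le {b : ℝ} (hb : b ≠ 0) (s : ℝ) :
    exp (s * tanh b) * cosh (b - s) / cosh b ≤ exp (tanh b / (2 * b) * s ^ 2) := by
  have h := log_cosh_sub_mul_sq_le hb (b - s)
  have hquad : tanh b / (2 * b) * ((b - s) ^ 2 - b ^ 2) =
      tanh b / (2 * b) * s ^ 2 - s * tanh b := by
    field_simp
    ring
  calc exp (s * tanh b) * cosh (b - s) / cosh b
      = exp (s * tanh b + log (cosh (b - s)) - log (cosh b)) := by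
        rw [exp_sub, exp_add, exp_log (cosh_pos _), exp_log (cosh_pos _)]
    _ ≤ exp (tanh b / (2 * b) * s ^ 2) := exp_le_exp.2 (by linarith)

lemma mul_exp_sq_add_one_eq_one {p b : ℝ} (h : p * exp (2 * b) = 1 - p) :
    p * (exp b ^ 2 + 1) = 1 := by
  rw [← exp_nat_mul]
  push_cast
  linarith

lemma tanh_eq_one_sub_two_mul {p b : ℝ} (h : p * exp (2 * b) = 1 - p) : tanh b = 1 - 2 * p := by
  rw [tanh_eq, exp_neg, div_eq_iff (by positivity)]
  field_simp
  linear_combination 2 * mul_exp_sq_add_one_eq_one h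

lemma cosh_sub_div_cosh_eq {p b : ℝ} (h : p * exp (2 * b) = 1 - p) (s : ℝ) :
    cosh (b - s) / cosh b = (1 - p) * exp (-s) + p * exp s := by
  rw [cosh_eq, cosh_eq, exp_sub, neg_sub, exp_sub, exp_neg, exp_neg, div_eq_iff (by positivity)]
  field_simp
  linear_combination (1 - exp s ^ 2) * mul_exp_sq_add_one_eq_one h

end Real

open Real

lemma bernoulli_mgf_eq (p t : ℝ) :
    (1 - p) * exp (-t * p) + p * exp (t * (1 - p)) =
      exp (t / 2 * (1 - 2 * p)) * ((1 - p) * exp (-(t / 2)) + p * exp (t / 2)) := by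
  rw [mul_add, mul_left_comm, mul_left_comm _ p, ← exp_add, ← exp_add]
  ring_nf

/-- Kearns–Saul inequality. -/
theorem kearns_saul (p t : ℝ) (hp0 : 0 < p) (hp1 : p < 1) :
    (1 - p) * Real.exp (-t * p) + p * Real.exp (t * (1 - p)) ≤
      Real.exp (kearnsSaulCoeff p * t ^ 2) := by
  rw [bernoulli_mgf_eq]
  rcases eq_or_ne p (1 / 2) with rfl | hp
  · rw [kearnsSaulCoeff, if_pos rfl]
    calc exp (t / 2 * (1 - 2 * (1 / 2))) * ((1 - 1 / 2) * exp (-(t / 2)) + 1 / 2 * exp (t / 2))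
        = cosh (t / 2) := by rw [cosh_eq]; ring_nf; simp
      _ ≤ exp ((t / 2) ^ 2 / 2) := cosh_le_exp_half_sq _
      _ = exp (1 / 8 * t ^ 2) := by ring_nf
  · obtain ⟨b, hb_def⟩ : ∃ b, log ((1 - p) / p) = 2 * b :=
      ⟨_, (mul_div_cancel₀ _ two_ne_zero).symm⟩
    have hpb : p * exp (2 * b) = 1 - p := by
      rw [← hb_def, exp_log (div_pos (by linarith) hp0)]
      field_simp
    have hb : b ≠ 0 := by
      rintro rfl
      rw [mul_zero, exp_zero, mul_one] at hpb
      exact hp (by linarith)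
    have hcoeff : kearnsSaulCoeff p * t ^ 2 = tanh b / (2 * b) * (t / 2) ^ 2 := by
      rw [kearnsSaulCoeff, if_neg hp, hb_def, tanh_eq_one_sub_two_mul hpb]
      field_simp
      ring
    rw [hcoeff, ← tanh_eq_one_sub_two_mul hpb, ← cosh_sub_div_cosh_eq hpb, ← mul_div_assoc]
    exact exp_mul_tanh_mul_cosh_sub_div_cosh_le hb (t / 2)
end

section
/- Let Z_1,…,Z_M be independent Bernoulli random variables with parameters p_1,…,p_M ∈ (0,1/2), and let w_m = ln((1-p_m)/p_m) > 0. Then P[ Σ_{m=1}^M w_m Z_m ≥ (1/2) Σ_{m=1}^M w_m ] ≤ exp( -(1/2) Σ_{m=1}^M w_m (1/2 - p_m) ). -/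
/-! Chernoff's bound at `s = 1` gives
`P[∑ w_m Z_m ≥ ½ ∑ w_m] ≤ exp(-½ ∑ w_m) ∏ E[exp(w_m Z_m)]`, and for `w = log((1-p)/p)` each factor
is `E[exp(w Z)] = 1 - p + p · (1-p)/p = 2(1-p)`. It remains to show `2(1-p) ≤ exp((1/4 + p/2) w)`:
with `q = 1 - 2p` this is `q (log(1+q) - log(1-q)) ≤ -2 log(1-q²)`, and the two sides expand as
`∑ 2q^(2k+2)/(2k+1)` and `∑ 2q^(2k+2)/(k+1)`. -/

open MeasureTheory ProbabilityTheory Real Finset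

theorem mul_log_sub_log_le_neg_two_mul_log_one_sub_sq {q : ℝ} (hq : |q| < 1) :
    q * (log (1 + q) - log (1 - q)) ≤ -2 * log (1 - q ^ 2) := by
  have hq2 : |q ^ 2| < 1 := by rw [abs_pow]; exact pow_lt_one₀ (abs_nonneg q) hq two_ne_zero
  have lhs := (hasSum_log_sub_log_of_abs_lt_one hq).mul_left q
  have rhs := (hasSum_pow_div_log_of_abs_lt_one hq2).mul_left 2
  have hterm : ∀ k : ℕ, q * (2 * (1 / (2 * k + 1)) * q ^ (2 * k + 1)) ≤
      2 * ((q ^ 2) ^ (k + 1) / (k + 1)) := fun k => by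
    have hk : (k : ℝ) + 1 ≤ 2 * k + 1 := by linarith [k.cast_nonneg (α := ℝ)]
    calc q * (2 * (1 / (2 * k + 1)) * q ^ (2 * k + 1)) = 2 * (q ^ 2) ^ (k + 1) / (2 * k + 1) := by
          ring
      _ ≤ 2 * (q ^ 2) ^ (k + 1) / (k + 1) := by gcongr
      _ = 2 * ((q ^ 2) ^ (k + 1) / (k + 1)) := by ring
  linarith [hasSum_le hterm lhs rhs]

theorem two_mul_one_sub_le_exp {p : ℝ} (h0 : 0 < p) (h1 : p < 1) :
    2 * (1 - p) ≤ exp ((1 / 4 + p / 2) * log ((1 - p) / p)) := by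
  have key := mul_log_sub_log_le_neg_two_mul_log_one_sub_sq (q := 1 - 2 * p)
    (abs_lt.2 ⟨by linarith, by linarith⟩)
  have e1 : 1 + (1 - 2 * p) = 2 * (1 - p) := by ring
  have e2 : 1 - (1 - 2 * p) = 2 * p := by ring
  have e3 : 1 - (1 - 2 * p) ^ 2 = 2 * (1 - p) * (2 * p) := by ring
  have e4 : (1 - p) / p = 2 * (1 - p) / (2 * p) := by field_simp
  rw [e1, e2, e3, log_mul (x := 2 * (1 - p)) (by positivity) (by positivity)] at key
  rw [e4, log_div (by positivity) (by positivity), ← log_le_iff_le_exp (by linarith)]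
  linarith

lemma exp_mul_eq_one_add_of_eq_zero_or_eq_one {z : ℝ} (hz : z = 0 ∨ z = 1) (t : ℝ) :
    exp (t * z) = 1 + (exp t - 1) * z := by
  rcases hz with rfl | rfl <;> simp

section ZeroOne

variable {Ω : Type*} [MeasurableSpace Ω] {μ : Measure Ω} {Z : Ω → ℝ}

lemma integral_eq_measureReal_of_eq_zero_or_eq_one (hZ : Measurable Z)
    (hval : ∀ ω, Z ω = 0 ∨ Z ω = 1) : ∫ ω, Z ω ∂μ = μ.real {ω | Z ω = 1} := by
  have hind : Z = {ω | Z ω = 1}.indicator 1 := by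
    ext ω
    rcases hval ω with h | h <;> simp [Set.indicator, h]
  conv_lhs => rw [hind]
  exact integral_indicator_one (hZ (measurableSet_singleton 1))

lemma integrable_of_eq_zero_or_eq_one [IsFiniteMeasure μ] (hZ : Measurable Z)
    (hval : ∀ ω, Z ω = 0 ∨ Z ω = 1) : Integrable Z μ := by
  refine (integrable_const (1 : ℝ)).mono' hZ.aestronglyMeasurable (ae_of_all _ fun ω => ?_)
  rcases hval ω with h | h <;> simp [h]

lemma integrable_exp_mul_of_eq_zero_or_eq_one [IsFiniteMeasure μ] (hZ : Measurable Z)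
    (hval : ∀ ω, Z ω = 0 ∨ Z ω = 1) (t : ℝ) : Integrable (fun ω => exp (t * Z ω)) μ := by
  simp_rw [exp_mul_eq_one_add_of_eq_zero_or_eq_one (hval _)]
  exact (integrable_const 1).add ((integrable_of_eq_zero_or_eq_one hZ hval).const_mul _)

lemma mgf_of_eq_zero_or_eq_one [IsProbabilityMeasure μ] (hZ : Measurable Z)
    (hval : ∀ ω, Z ω = 0 ∨ Z ω = 1) (t : ℝ) :
    mgf Z μ t = 1 - μ.real {ω | Z ω = 1} + μ.real {ω | Z ω = 1} * exp t := by
  simp_rw [mgf, exp_mul_eq_one_add_of_eq_zero_or_eq_one (hval _)]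
  rw [integral_add (integrable_const 1) ((integrable_of_eq_zero_or_eq_one hZ hval).const_mul _),
    integral_const_mul, integral_eq_measureReal_of_eq_zero_or_eq_one hZ hval]
  simp only [integral_const, probReal_univ, smul_eq_mul, mul_one]
  ring

end ZeroOne

theorem measureReal_sum_mul_ge_le_exp_mul_prod {Ω ι : Type*} [MeasurableSpace Ω]
    {μ : Measure Ω} [IsProbabilityMeasure μ] [Fintype ι] {Z : ι → Ω → ℝ}
    (hmeas : ∀ i, Measurable (Z i)) (hval : ∀ i ω, Z i ω = 0 ∨ Z i ω = 1)
    (hindep : iIndepFun Z μ) (w : ι → ℝ) (ε : ℝ) :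
    μ.real {ω | ε ≤ ∑ i, w i * Z i ω} ≤
      exp (-ε) * ∏ i, (1 - μ.real {ω | Z i ω = 1} + μ.real {ω | Z i ω = 1} * exp (w i)) := by
  set Y : ι → Ω → ℝ := fun i ω => w i * Z i ω
  have hYmeas : ∀ i, Measurable (Y i) := fun i => (hmeas i).const_mul (w i)
  have hYindep : iIndepFun Y μ := hindep.comp (fun i x => w i * x) fun i => measurable_const_mul _
  have hint : Integrable (fun ω => exp (1 * (∑ i, Y i) ω)) μ :=
    hYindep.integrable_exp_mul_sum hYmeas fun i _ => by
      simpa only [Y, one_mul] using integrable_exp_mul_of_eq_zero_or_eq_one (hmeas i) (hval i) (w i)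
  have hchernoff := measure_ge_le_exp_mul_mgf ε zero_le_one hint
  rw [hYindep.mgf_sum hYmeas] at hchernoff
  simpa only [Y, mgf_const_mul, mgf_of_eq_zero_or_eq_one (hmeas _) (hval _), Finset.sum_apply,
    mul_one, neg_one_mul] using hchernoff

/-- Weighted-majority-vote decoding error bound (Chernoff + Kearns–Saul):
    for independent Bernoulli(p_m) variables `Z_m` with `p_m ∈ (0,1/2)` and
    LLR weights `w_m = ln((1-p_m)/p_m)`,
    `P[Σ w_m Z_m ≥ (1/2) Σ w_m] ≤ exp(-(1/2) Σ w_m (1/2 - p_m))`. -/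
theorem wmv_decoding_error_bound {Ω : Type*} [MeasurableSpace Ω]
    (μ : Measure Ω) [IsProbabilityMeasure μ] (M : ℕ)
    (Z : Fin M → Ω → ℝ) (p : Fin M → ℝ)
    (hp : ∀ m, 0 < p m ∧ p m < 1/2)
    (hmeas : ∀ m, Measurable (Z m))
    (hval : ∀ m ω, Z m ω = 0 ∨ Z m ω = 1)
    (hBern : ∀ m, μ {ω | Z m ω = 1} = ENNReal.ofReal (p m))
    (hindep : iIndepFun Z μ) :
    μ {ω | (1/2) * ∑ m, Real.log ((1 - p m) / p m) ≤
        ∑ m, Real.log ((1 - p m) / p m) * Z m ω} ≤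
      ENNReal.ofReal
        (Real.exp (-(1/2) * ∑ m, Real.log ((1 - p m) / p m) * (1/2 - p m))) := by
  set w : Fin M → ℝ := fun m => log ((1 - p m) / p m)
  have hprob : ∀ m, μ.real {ω | Z m ω = 1} = p m := fun m => by
    rw [measureReal_def, hBern, ENNReal.toReal_ofReal (hp m).1.le]
  have hfactor : ∀ m, 1 - p m + p m * exp (w m) = 2 * (1 - p m) := fun m => by
    obtain ⟨hp0, hp1⟩ := hp m
    rw [exp_log (div_pos (by linarith) hp0)]
    field_simp
    ring
  have hprod : ∏ m, (2 * (1 - p m)) ≤ exp (∑ m, (1 / 4 + p m / 2) * w m) := by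
    rw [exp_sum]
    exact prod_le_prod (fun m _ => by linarith [(hp m).2])
      fun m _ => two_mul_one_sub_le_exp (hp m).1 (by linarith [(hp m).2])
  have hchernoff := measureReal_sum_mul_ge_le_exp_mul_prod hmeas hval hindep w
    ((1/2) * ∑ m, w m)
  simp only [hprob, hfactor] at hchernoff
  rw [← ENNReal.ofReal_toReal (measure_ne_top μ _)]
  refine ENNReal.ofReal_le_ofReal (hchernoff.trans ?_)
  calc exp (-((1/2) * ∑ m, w m)) * ∏ m, (2 * (1 - p m))
      ≤ exp (-((1/2) * ∑ m, w m)) * exp (∑ m, (1 / 4 + p m / 2) * w m) := by gcongr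
    _ = exp (-(1/2) * ∑ m, w m * (1/2 - p m)) := by
      rw [← exp_add, mul_sum, mul_sum, ← sum_neg_distrib, ← sum_add_distrib]
      congr 1
      exact sum_congr rfl fun m _ => by ring
end

section
/- Let g be a real-valued random variable with E[g] = ḡ ≠ 0 and E[(g - ḡ)²/ḡ²] ≤ σ²/B for constants σ > 0 and B ≥ 1. Then P[sign(g) ≠ sign(ḡ)] ≤ σ/√B. -/
/-!
Where the signs of `g` and `ḡ` differ, `|ḡ| ≤ |g - ḡ|`, so Markov's inequality applied to the
normalized squared deviation `(g - ḡ)² / ḡ²` bounds the probability `p` of a sign error by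
`σ² / B`. As `p` is also at most `1`, `p ≤ √p ≤ σ / √B`.
-/

open MeasureTheory

theorem Real.abs_le_abs_sub_of_sign_ne {x a : ℝ} (h : Real.sign x ≠ Real.sign a) :
    |a| ≤ |x - a| := by
  rcases lt_trichotomy a 0 with ha | rfl | ha
  · have hx : 0 ≤ x := by
      by_contra! hx
      exact h (by rw [Real.sign_of_neg hx, Real.sign_of_neg ha])
    rw [abs_of_neg ha, abs_of_nonneg (by linarith)]
    linarith
  · simp
  · have hx : x ≤ 0 := by
      by_contra! hx
      exact h (by rw [Real.sign_of_pos hx, Real.sign_of_pos ha])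
    rw [abs_of_pos ha, abs_of_nonpos (by linarith)]
    linarith

theorem ENNReal.le_of_le_one_of_le_sq {p s : ENNReal} (hp : p ≤ 1) (hps : p ≤ s ^ 2) : p ≤ s := by
  have : p ^ 2 ≤ s ^ 2 := (pow_le_of_le_one zero_le hp two_ne_zero).trans hps
  exact (ENNReal.pow_le_pow_left_iff two_ne_zero).mp this

theorem MeasureTheory.measure_le_ofReal_integral_of_one_le {α : Type*} [MeasurableSpace α]
    {μ : Measure α} {f : α → ℝ} {s : Set α} (hf : Integrable f μ) (hf_nonneg : 0 ≤ᵐ[μ] f)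
    (hs : ∀ x ∈ s, 1 ≤ f x) : μ s ≤ ENNReal.ofReal (∫ x, f x ∂μ) := by
  rw [ofReal_integral_eq_lintegral_ofReal hf hf_nonneg]
  exact meas_le_lintegral₀ hf.aestronglyMeasurable.aemeasurable.ennreal_ofReal
    fun x hx => ENNReal.one_le_ofReal.mpr (hs x hx)

theorem computing_error_bound_general {Ω : Type*} [MeasurableSpace Ω]
    (μ : Measure Ω) [IsProbabilityMeasure μ]
    (g : Ω → ℝ) (gbar σ B : ℝ) (hgbar : gbar ≠ 0) (hσ : 0 < σ) (hB : 1 ≤ B)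
    (hint2 : Integrable (fun ω => (g ω - gbar) ^ 2 / gbar ^ 2) μ)
    (hvar : ∫ ω, (g ω - gbar) ^ 2 / gbar ^ 2 ∂μ ≤ σ ^ 2 / B) :
    μ {ω | Real.sign (g ω) ≠ Real.sign gbar} ≤
      ENNReal.ofReal (σ / Real.sqrt B) := by
  have hdev : ∀ ω ∈ {ω | Real.sign (g ω) ≠ Real.sign gbar}, 1 ≤ (g ω - gbar) ^ 2 / gbar ^ 2 :=
    fun ω hω => (one_le_div (by positivity)).mpr
      (sq_le_sq.mpr (Real.abs_le_abs_sub_of_sign_ne hω))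
  have hsq : ENNReal.ofReal (σ ^ 2 / B) = ENNReal.ofReal (σ / Real.sqrt B) ^ 2 := by
    rw [← ENNReal.ofReal_pow (by positivity), div_pow, Real.sq_sqrt (by linarith)]
  refine ENNReal.le_of_le_one_of_le_sq prob_le_one ?_
  calc μ {ω | Real.sign (g ω) ≠ Real.sign gbar}
      ≤ ENNReal.ofReal (∫ ω, (g ω - gbar) ^ 2 / gbar ^ 2 ∂μ) :=
        measure_le_ofReal_integral_of_one_le hint2 (ae_of_all _ fun ω => by positivity) hdev
    _ ≤ ENNReal.ofReal (σ / Real.sqrt B) ^ 2 := hsq ▸ ENNReal.ofReal_le_ofReal hvar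

/-- Computing error probability bound for a worker with mini-batch size `B`:
    if `g` is unbiased with normalized variance at most `σ²/B`, then
    `P[sign g ≠ sign ḡ] ≤ σ/√B`. -/
theorem computing_error_bound {Ω : Type*} [MeasurableSpace Ω]
    (μ : Measure Ω) [IsProbabilityMeasure μ]
    (g : Ω → ℝ) (gbar σ B : ℝ) (hgbar : gbar ≠ 0) (hσ : 0 < σ) (hB : 1 ≤ B)
    (hmeas : Measurable g) (hint : Integrable g μ)
    (hint2 : Integrable (fun ω => (g ω - gbar) ^ 2 / gbar ^ 2) μ)
    (hmean : ∫ ω, g ω ∂μ = gbar)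
    (hvar : ∫ ω, (g ω - gbar) ^ 2 / gbar ^ 2 ∂μ ≤ σ ^ 2 / B) :
    μ {ω | Real.sign (g ω) ≠ Real.sign gbar} ≤
      ENNReal.ofReal (σ / Real.sqrt B) :=
  computing_error_bound_general μ g gbar σ B hgbar hσ hB hint2 hvar
end

section
/- Let Z_1,…,Z_M be independent Bernoulli random variables with parameters p_m ∈ (0,1/2), let w_m = ln((1-p_m)/p_m), and let ŵ_m > 0 satisfy (1-δ_min)·w_m ≤ ŵ_m ≤ (1+δ_max)·w_m with 0 ≤ δ_min < 1 and δ_max ≥ 0. Then P[ Σ_m ŵ_m Z_m ≥ (1/2) Σ_m ŵ_m ] ≤ exp( -((1-δ_min)/(1+δ_max)) · (1/2) Σ_m w_m (1/2 - p_m) ). -/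
/-!
Centre the summands, `X_m = ŵ_m (Z_m - 1/2)`, and apply the Chernoff bound to `∑ X_m ≥ 0` at
`s = 1/(1+δmax)`. With `λ = s ŵ_m ∈ [0, w_m]`, each factor of the moment generating function is
`(1-p) e^{-λ/2} + p e^{λ/2}`, and this is at most `exp(-λ(1/2-p)/2)`: writing `e^λ = a^t` with
`a = (1-p)/p` and `t = λ/w ∈ [0,1]`, concavity of `x ↦ x^t` bounds `1 - p + p a^t` by
`(2(1-p))^t`, and `log (2(1-p)) ≤ (1+2p)/4 · w` is a one-variable calculus fact (the
Kearns–Saul bound at `λ = w`). Finally `λ ≥ (1-δmin)/(1+δmax) · w_m`.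
-/

open MeasureTheory ProbabilityTheory Real Set

lemma Real.log_le_sub_inv_div_two {x : ℝ} (hx : 1 ≤ x) : log x ≤ (x - x⁻¹) / 2 := by
  rw [← sinh_log (by linarith)]
  exact self_le_sinh_iff.2 (log_nonneg hx)

lemma Real.one_sub_add_mul_rpow_le {p a t : ℝ} (hp0 : 0 ≤ p) (hp1 : p ≤ 1) (ha : 0 ≤ a)
    (ht0 : 0 ≤ t) (ht1 : t ≤ 1) : 1 - p + p * a ^ t ≤ (1 - p + p * a) ^ t := by
  simpa [smul_eq_mul, one_rpow] using (concaveOn_rpow ht0 ht1).2 (mem_Ici.2 zero_le_one)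
    (mem_Ici.2 ha) (sub_nonneg.2 hp1) hp0 (sub_add_cancel 1 p)

lemma log_two_mul_one_sub_le {q : ℝ} (hq0 : 0 < q) (hq : q ≤ 1 / 2) :
    log (2 * (1 - q)) ≤ (1 + 2 * q) / 4 * log ((1 - q) / q) := by
  set φ := fun x : ℝ => (1 + 2 * x) / 4 * (log (1 - x) - log x) - log (1 - x)
  have hderiv : ∀ x ∈ Icc q (1 / 2),
      HasDerivAt φ ((log ((1 - x) / x) - ((1 - x) / x - x / (1 - x)) / 2) / 2) x := by
    intro x hx
    have hx0 : x ≠ 0 := (hq0.trans_le hx.1).ne'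
    have hx1 : 1 - x ≠ 0 := by linarith [hx.2]
    have hlog : HasDerivAt (fun y => log (1 - y)) (-1 / (1 - x)) x := by
      simpa using ((hasDerivAt_id x).const_sub 1).log hx1
    refine ((((hasDerivAt_id x).const_mul 2).const_add 1).div_const 4 |>.mul
      (hlog.sub (hasDerivAt_log hx0)) |>.sub hlog).congr_deriv ?_
    rw [log_div hx1 hx0]
    simp only [Pi.sub_apply, id]
    field_simp
    ring
  -- `φ' ≤ 0` is `log_le_sub_inv_div_two` at `(1 - x) / x`.
  have hanti : AntitoneOn φ (Icc q (1 / 2)) := by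
    refine antitoneOn_of_deriv_nonpos (convex_Icc _ _) (HasDerivAt.continuousOn hderiv)
      (fun x hx => (hderiv x (interior_subset hx)).differentiableAt.differentiableWithinAt)
      fun x hx => ?_
    rw [(hderiv x (interior_subset hx)).deriv]
    rw [interior_Icc] at hx
    have key := log_le_sub_inv_div_two (x := (1 - x) / x)
      ((one_le_div (hq0.trans hx.1)).2 (by linarith [hx.2]))
    rw [inv_div] at key
    linarith
  have hle := hanti ⟨le_rfl, hq⟩ ⟨hq, le_rfl⟩ hq
  norm_num [φ] at hle
  rw [one_div, log_inv] at hle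
  have h1q : 1 - q ≠ 0 := by linarith
  rw [log_mul two_ne_zero h1q, log_div h1q hq0.ne']
  linarith

lemma one_sub_mul_exp_add_mul_exp_le {p l : ℝ} (hp0 : 0 < p) (hp : p < 1 / 2) (hl0 : 0 ≤ l)
    (hl : l ≤ log ((1 - p) / p)) :
    (1 - p) * exp (-(l / 2)) + p * exp (l / 2) ≤ exp (-(l * (1 / 2 - p) / 2)) := by
  set a := (1 - p) / p
  have ha0 : 0 < a := div_pos (by linarith) hp0
  have hw : 0 < log a := log_pos ((one_lt_div hp0).2 (by linarith))
  set t := l / log a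
  have hl_eq : l = t * log a := (div_mul_cancel₀ l hw.ne').symm
  have hexp : exp l = a ^ t := by rw [rpow_def_of_pos ha0, hl_eq, mul_comm]
  have ha : 1 - p + p * a = 2 * (1 - p) := by simp only [a]; field_simp; ring
  have hchord : 1 - p + p * exp l ≤ exp (l * (1 + 2 * p) / 4) := calc
    1 - p + p * exp l = 1 - p + p * a ^ t := by rw [hexp]
    _ ≤ (2 * (1 - p)) ^ t := ha ▸ one_sub_add_mul_rpow_le hp0.le (by linarith)
        ha0.le (div_nonneg hl0 hw.le) ((div_le_one hw).2 hl)
    _ = exp (log (2 * (1 - p)) * t) := rpow_def_of_pos (by linarith) t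
    _ ≤ exp ((1 + 2 * p) / 4 * log a * t) := by
        gcongr
        exact log_two_mul_one_sub_le hp0 hp.le
    _ = exp (l * (1 + 2 * p) / 4) := by rw [hl_eq]; ring_nf
  calc (1 - p) * exp (-(l / 2)) + p * exp (l / 2)
      = exp (-(l / 2)) * (1 - p + p * exp l) := by
        rw [mul_add, mul_left_comm, ← exp_add]; ring_nf
    _ ≤ exp (-(l / 2)) * exp (l * (1 + 2 * p) / 4) := by gcongr
    _ = exp (-(l * (1 / 2 - p) / 2)) := by rw [← exp_add]; ring_nf

lemma one_sub_mul_exp_add_mul_exp_div_le {p v a b : ℝ} (hp0 : 0 < p) (hp : p < 1 / 2)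
    (hb : 0 < b) (hv : 0 ≤ v) (hav : a * log ((1 - p) / p) ≤ v)
    (hvb : v ≤ b * log ((1 - p) / p)) :
    (1 - p) * exp (-(v / b / 2)) + p * exp (v / b / 2) ≤
      exp (-(a / b) * (log ((1 - p) / p) * (1 / 2 - p)) / 2) := by
  refine (one_sub_mul_exp_add_mul_exp_le hp0 hp (by positivity)
    ((div_le_iff₀' hb).2 hvb)).trans (exp_le_exp.2 ?_)
  have : a / b * log ((1 - p) / p) ≤ v / b := by
    rw [div_mul_eq_mul_div]; gcongr
  have : 0 ≤ 1 / 2 - p := by linarith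
  nlinarith

section ZeroOne

variable {Ω : Type*} {Z : Ω → ℝ}

lemma comp_eq_add_indicator_of_forall_eq_zero_or_one (hZ : ∀ ω, Z ω = 0 ∨ Z ω = 1)
    (g : ℝ → ℝ) :
    (fun ω => g (Z ω)) = fun ω => g 0 + {ω | Z ω = 1}.indicator (fun _ => g 1 - g 0) ω := by
  ext ω
  rcases hZ ω with h | h <;> simp [h]

variable [MeasurableSpace Ω] {μ : Measure Ω}

lemma integrable_comp_of_forall_eq_zero_or_one [IsFiniteMeasure μ] (hZm : Measurable Z)
    (hZ : ∀ ω, Z ω = 0 ∨ Z ω = 1) (g : ℝ → ℝ) : Integrable (fun ω => g (Z ω)) μ := by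
  rw [comp_eq_add_indicator_of_forall_eq_zero_or_one hZ]
  exact (integrable_const _).add ((integrable_const _).indicator (hZm (measurableSet_singleton 1)))

lemma integral_comp_of_forall_eq_zero_or_one [IsProbabilityMeasure μ] (hZm : Measurable Z)
    (hZ : ∀ ω, Z ω = 0 ∨ Z ω = 1) (g : ℝ → ℝ) :
    ∫ ω, g (Z ω) ∂μ = (1 - μ.real {ω | Z ω = 1}) * g 0 + μ.real {ω | Z ω = 1} * g 1 := by
  have hS : MeasurableSet {ω | Z ω = 1} := hZm (measurableSet_singleton 1)
  rw [comp_eq_add_indicator_of_forall_eq_zero_or_one hZ, integral_add (integrable_const _)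
    ((integrable_const _).indicator hS), integral_const, integral_indicator_const _ hS]
  simp only [probReal_univ, smul_eq_mul]
  ring

end ZeroOne

theorem wmv_decoding_error_bound_imperfect_general {Ω : Type*} [MeasurableSpace Ω]
    (μ : Measure Ω) [IsProbabilityMeasure μ] (M : ℕ)
    (Z : Fin M → Ω → ℝ) (p what : Fin M → ℝ) (δmin δmax : ℝ)
    (hp : ∀ m, 0 < p m ∧ p m < 1/2)
    (hδmax : 0 ≤ δmax)
    (hwhatpos : ∀ m, 0 < what m)
    (hwlb : ∀ m, (1 - δmin) * Real.log ((1 - p m) / p m) ≤ what m)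
    (hwub : ∀ m, what m ≤ (1 + δmax) * Real.log ((1 - p m) / p m))
    (hmeas : ∀ m, Measurable (Z m))
    (hval : ∀ m ω, Z m ω = 0 ∨ Z m ω = 1)
    (hBern : ∀ m, μ {ω | Z m ω = 1} = ENNReal.ofReal (p m))
    (hindep : iIndepFun Z μ) :
    μ {ω | (1/2) * ∑ m, what m ≤ ∑ m, what m * Z m ω} ≤
      ENNReal.ofReal
        (Real.exp (-((1 - δmin) / (1 + δmax)) * ((1/2) *
          ∑ m, Real.log ((1 - p m) / p m) * (1/2 - p m)))) := by
  set s := (1 + δmax)⁻¹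
  set X : Fin M → Ω → ℝ := fun m ω => what m * (Z m ω - 1 / 2)
  have hX_meas : ∀ m, Measurable (X m) := fun m => by fun_prop
  have hX_indep : iIndepFun X μ :=
    hindep.comp (fun m x => what m * (x - 1 / 2)) fun m => by fun_prop
  have hX_int : ∀ m, Integrable (fun ω => exp (s * X m ω)) μ := fun m =>
    integrable_comp_of_forall_eq_zero_or_one (hmeas m) (hval m)
      fun x => exp (s * (what m * (x - 1 / 2)))
  have hX_mgf : ∀ m, mgf (X m) μ s ≤
      exp (-((1 - δmin) / (1 + δmax)) * (log ((1 - p m) / p m) * (1 / 2 - p m)) / 2) := by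
    intro m
    have hpm : μ.real {ω | Z m ω = 1} = p m := by
      rw [measureReal_def, hBern m, ENNReal.toReal_ofReal (hp m).1.le]
    rw [mgf, integral_comp_of_forall_eq_zero_or_one (hmeas m) (hval m)
      fun x => exp (s * (what m * (x - 1 / 2))), hpm]
    convert one_sub_mul_exp_add_mul_exp_div_le (hp m).1 (hp m).2 (by linarith)
      (hwhatpos m).le (hwlb m) (hwub m) using 4 <;> ring
  have hevent : {ω | (1/2) * ∑ m, what m ≤ ∑ m, what m * Z m ω} = {ω | 0 ≤ (∑ m, X m) ω} := by
    ext ω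
    simp only [mem_ofPred_eq, Finset.sum_apply, X, mul_sub, Finset.sum_sub_distrib,
      ← Finset.sum_mul, sub_nonneg, mul_comm]
  rw [hevent, ← ofReal_measureReal]
  refine ENNReal.ofReal_le_ofReal ?_
  calc μ.real {ω | 0 ≤ (∑ m, X m) ω}
      ≤ exp (-s * 0) * mgf (∑ m, X m) μ s := measure_ge_le_exp_mul_mgf 0 (by positivity)
        (hX_indep.integrable_exp_mul_sum hX_meas fun m _ => hX_int m)
    _ = ∏ m, mgf (X m) μ s := by rw [hX_indep.mgf_sum hX_meas]; simp
    _ ≤ ∏ m, exp (-((1 - δmin) / (1 + δmax)) * (log ((1 - p m) / p m) * (1 / 2 - p m)) / 2) :=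
        Finset.prod_le_prod (fun m _ => mgf_nonneg) fun m _ => hX_mgf m
    _ = _ := by
        rw [← exp_sum, Finset.mul_sum, Finset.mul_sum]
        exact congrArg exp (Finset.sum_congr rfl fun m _ => by ring)

/-- Weighted-majority-vote decoding error bound with imperfect LLR weights:
    if `(1-δmin)·w_m ≤ ŵ_m ≤ (1+δmax)·w_m` where `w_m = ln((1-p_m)/p_m)`, then
    `P[Σ ŵ_m Z_m ≥ (1/2) Σ ŵ_m]
      ≤ exp(-((1-δmin)/(1+δmax))·(1/2)·Σ w_m (1/2 - p_m))`. -/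
theorem wmv_decoding_error_bound_imperfect {Ω : Type*} [MeasurableSpace Ω]
    (μ : Measure Ω) [IsProbabilityMeasure μ] (M : ℕ)
    (Z : Fin M → Ω → ℝ) (p what : Fin M → ℝ) (δmin δmax : ℝ)
    (hp : ∀ m, 0 < p m ∧ p m < 1/2)
    (hδmin0 : 0 ≤ δmin) (hδmin1 : δmin < 1) (hδmax : 0 ≤ δmax)
    (hwhatpos : ∀ m, 0 < what m)
    (hwlb : ∀ m, (1 - δmin) * Real.log ((1 - p m) / p m) ≤ what m)
    (hwub : ∀ m, what m ≤ (1 + δmax) * Real.log ((1 - p m) / p m))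
    (hmeas : ∀ m, Measurable (Z m))
    (hval : ∀ m ω, Z m ω = 0 ∨ Z m ω = 1)
    (hBern : ∀ m, μ {ω | Z m ω = 1} = ENNReal.ofReal (p m))
    (hindep : iIndepFun Z μ) :
    μ {ω | (1/2) * ∑ m, what m ≤ ∑ m, what m * Z m ω} ≤
      ENNReal.ofReal
        (Real.exp (-((1 - δmin) / (1 + δmax)) * ((1/2) *
          ∑ m, Real.log ((1 - p m) / p m) * (1/2 - p m)))) :=
  wmv_decoding_error_bound_imperfect_general μ M Z p what δmin δmax hp hδmax hwhatpos hwlb hwub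
    hmeas hval hBern hindep
end

section
/- Let f: ℝ^N → ℝ satisfy coordinate-wise smoothness: |f(y) - f(x) - ⟨∇f(x), y - x⟩| ≤ Σ_n (L_n/2)(y_n - x_n)² for nonnegative constants L_n. Let ḡ = ∇f(x), let Û ∈ {-1,+1}^N, U_n = sign(ḡ_n), δ > 0, and x' = x - δ·Û. Then f(x') - f(x) ≤ -δ·‖ḡ‖_1 + (δ²/2)·‖L‖_1 + 2δ·Σ_{n=1}^N |ḡ_n|·1{U_n ≠ Û_n}. -/
open Finset

theorem mul_eq_abs_sub_two_mul_abs_mul_ite_sign_ne {g u : ℝ} (hu : u = 1 ∨ u = -1) :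
    g * u = |g| - 2 * (|g| * if Real.sign g ≠ u then 1 else 0) := by
  rcases lt_trichotomy g 0 with hg | rfl | hg <;> rcases hu with rfl | rfl <;>
    norm_num [Real.sign_of_neg, Real.sign_of_pos, abs_of_neg, abs_of_pos, *] <;> ring

theorem sum_mul_eq_sum_abs_sub_two_mul_sum_ite_sign_ne {ι : Type*} (s : Finset ι)
    (g u : ι → ℝ) (hu : ∀ i, u i = 1 ∨ u i = -1) :
    ∑ i ∈ s, g i * u i =
      ∑ i ∈ s, |g i| - 2 * ∑ i ∈ s, |g i| * (if Real.sign (g i) ≠ u i then 1 else 0) := by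
  simp only [mul_eq_abs_sub_two_mul_abs_mul_ite_sign_ne (hu _), sum_sub_distrib, mul_sum]

theorem sign_descent_step_general (N : ℕ) (f : (Fin N → ℝ) → ℝ)
    (G : (Fin N → ℝ) → (Fin N → ℝ)) (L : Fin N → ℝ)
    (hsmooth : ∀ x y : Fin N → ℝ,
      |f y - f x - ∑ n, G x n * (y n - x n)| ≤ ∑ n, L n / 2 * (y n - x n) ^ 2)
    (x : Fin N → ℝ) (U : Fin N → ℝ) (hU : ∀ n, U n = 1 ∨ U n = -1)
    (δ : ℝ) :
    f (fun n => x n - δ * U n) - f x ≤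
      -δ * ∑ n, |G x n| + δ ^ 2 / 2 * ∑ n, L n +
        2 * δ * ∑ n, |G x n| * (if Real.sign (G x n) ≠ U n then (1:ℝ) else 0) := by
  have hdescent := (abs_le.mp (hsmooth x fun n => x n - δ * U n)).2
  have hlinear : ∑ n, G x n * (x n - δ * U n - x n) = -δ * ∑ n, G x n * U n := by
    rw [mul_sum]; exact sum_congr rfl fun n _ => by ring
  have hquadratic : ∑ n, L n / 2 * (x n - δ * U n - x n) ^ 2 = δ ^ 2 / 2 * ∑ n, L n := by
    rw [mul_sum]
    refine sum_congr rfl fun n _ => ?_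
    rcases hU n with h | h <;> rw [h] <;> ring
  rw [hlinear, hquadratic, sum_mul_eq_sum_abs_sub_two_mul_sum_ite_sign_ne _ _ _ hU] at hdescent
  linarith

/-- One-step descent inequality for sign-based updates with possibly erroneous
    sign estimates. `G x` plays the role of the gradient `∇f(x)`. -/
theorem sign_descent_step (N : ℕ) (f : (Fin N → ℝ) → ℝ)
    (G : (Fin N → ℝ) → (Fin N → ℝ)) (L : Fin N → ℝ) (hL : ∀ n, 0 ≤ L n)
    (hsmooth : ∀ x y : Fin N → ℝ,
      |f y - f x - ∑ n, G x n * (y n - x n)| ≤ ∑ n, L n / 2 * (y n - x n) ^ 2)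
    (x : Fin N → ℝ) (U : Fin N → ℝ) (hU : ∀ n, U n = 1 ∨ U n = -1)
    (δ : ℝ) (hδ : 0 < δ) :
    f (fun n => x n - δ * U n) - f x ≤
      -δ * ∑ n, |G x n| + δ ^ 2 / 2 * ∑ n, L n +
        2 * δ * ∑ n, |G x n| * (if Real.sign (G x n) ≠ U n then (1:ℝ) else 0) :=
  sign_descent_step_general N f G L hsmooth x U hU δ
end

section
/- Let f: ℝ^N → ℝ be coordinate-wise L-smooth with lower bound f* ≤ f(x) for all x, and consider iterates x^{t+1} = x^t - δ·Û^t where Û^t ∈ {-1,+1}^N is random with P[sign(∂_n f(x^t)) ≠ Û_n^t | x^t] ≤ P_E for some P_E < 1/2, for all n and t. Then with the fixed step size δ = √(2(f(x¹) - f*)/(T·‖L‖_1)), E[(1/T)·Σ_{t=1}^T ‖∇f(x^t)‖_1] ≤ (1/(1 - 2P_E))·√(2(f(x¹) - f*)·‖L‖_1 / T). -/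
/-!
Coordinate-wise smoothness applied to one step `x ↦ x - δ u` with `u ∈ {±1}ᴺ` gives
`f(x - δu) ≤ f(x) - δ‖∇f(x)‖₁ + 2δ Σₙ |∂ₙf(x)| 1[sign ∂ₙf(x) ≠ uₙ] + δ²‖L‖₁/2`.
Since `|∂ₙf(xᵗ)|` is a function of `xᵗ`, it can be pulled out of the conditional expectation
given `xᵗ`, so the expected error term is at most `P_E E‖∇f(xᵗ)‖₁`. Telescoping the resulting
expected descent over `t`, using `f* ≤ f`, leaves `δ(1 - 2P_E) Σₜ E‖∇f(xᵗ)‖₁ ≤ f(x¹) - f* +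
Tδ²‖L‖₁/2`, and the chosen `δ` makes the last term equal to `f(x¹) - f*`.
-/

open MeasureTheory Filter Asymptotics

lemma Real.measurable_sign : Measurable Real.sign :=
  Measurable.ite (measurableSet_lt measurable_id measurable_const) measurable_const
    (Measurable.ite (measurableSet_lt measurable_const measurable_id) measurable_const
      measurable_const)

section CoordwiseSmooth

variable {ι : Type*} [Fintype ι]

def CoordwiseSmoothWith (L : ι → ℝ) (f : (ι → ℝ) → ℝ) (G : (ι → ℝ) → ι → ℝ) : Prop :=
  ∀ x y : ι → ℝ, |f y - f x - ∑ n, G x n * (y n - x n)| ≤ ∑ n, L n / 2 * (y n - x n) ^ 2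

variable {L : ι → ℝ} {f : (ι → ℝ) → ℝ} {G : (ι → ℝ) → ι → ℝ}

lemma CoordwiseSmoothWith.hasFDerivAt (hf : CoordwiseSmoothWith L f G) (x : ι → ℝ) :
    HasFDerivAt f (∑ n, G x n • ContinuousLinearMap.proj n : (ι → ℝ) →L[ℝ] ℝ) x := by
  refine HasFDerivAt.of_isLittleO (IsBigO.trans_isLittleO (g := fun y => ‖y - x‖ ^ 2) ?_
    (isLittleO_pow_sub_sub x one_lt_two))
  refine IsBigO.of_bound (∑ n, |L n| / 2) (Eventually.of_forall fun y => ?_)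
  have hcoord : ∀ n, L n / 2 * (y n - x n) ^ 2 ≤ |L n| / 2 * ‖y - x‖ ^ 2 := fun n => by
    have hsq : (y n - x n) ^ 2 ≤ ‖y - x‖ ^ 2 := by
      rw [← sq_abs, ← Real.norm_eq_abs]
      exact pow_le_pow_left₀ (norm_nonneg _) (norm_le_pi_norm (y - x) n) 2
    exact mul_le_mul (div_le_div_of_nonneg_right (le_abs_self _) zero_le_two) hsq
      (sq_nonneg _) (by positivity)
  simp only [FunLike.coe_sum, FunLike.coe_smul, Finset.sum_apply,
    Pi.smul_apply, ContinuousLinearMap.proj_apply, Pi.sub_apply, smul_eq_mul, Real.norm_eq_abs,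
    abs_pow, abs_norm, Finset.sum_mul]
  exact (hf x y).trans (Finset.sum_le_sum fun n _ => hcoord n)

/-- `G` is the gradient of `f`, so it inherits the measurability of `fderiv`. -/
lemma CoordwiseSmoothWith.measurable_apply (hf : CoordwiseSmoothWith L f G) (n : ι) :
    Measurable fun v => G v n := by
  classical
  have hG : (fun v => G v n) = fun v => fderiv ℝ f v (Pi.single n 1) := funext fun v => by
    simp [(hf.hasFDerivAt v).fderiv, Pi.single_apply]
  exact hG ▸ measurable_fderiv_apply_const ℝ f (Pi.single n 1)

lemma mul_eq_abs_sub_of_unit_sign {a u : ℝ} (hu : u = 1 ∨ u = -1) :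
    a * u = |a| - 2 * (if Real.sign a ≠ u then |a| else 0) := by
  rcases hu with rfl | rfl <;> rcases lt_trichotomy a 0 with h | h | h <;>
    simp [Real.sign_of_neg, Real.sign_of_pos, h, abs_of_neg, abs_of_pos] <;> norm_num <;> ring

lemma CoordwiseSmoothWith.apply_signStep_le (hf : CoordwiseSmoothWith L f G) (δ : ℝ)
    {x u : ι → ℝ} (hu : ∀ n, u n = 1 ∨ u n = -1) :
    f (fun n => x n - δ * u n) ≤ f x - δ * ∑ n, |G x n|
      + 2 * δ * ∑ n, (if Real.sign (G x n) ≠ u n then |G x n| else 0)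
      + δ ^ 2 * (∑ n, L n) / 2 := by
  have hlin : ∑ n, G x n * (x n - δ * u n - x n) = -(δ * ∑ n, |G x n|)
      + 2 * δ * ∑ n, (if Real.sign (G x n) ≠ u n then |G x n| else 0) := by
    simp only [Finset.mul_sum, ← Finset.sum_neg_distrib, ← Finset.sum_add_distrib]
    refine Finset.sum_congr rfl fun n _ => ?_
    linear_combination (-δ) * mul_eq_abs_sub_of_unit_sign (a := G x n) (hu n)
  have hquad : ∑ n, L n / 2 * (x n - δ * u n - x n) ^ 2 = δ ^ 2 * (∑ n, L n) / 2 := by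
    simp only [Finset.mul_sum, Finset.sum_div]
    refine Finset.sum_congr rfl fun n _ => ?_
    rcases hu n with h | h <;> rw [h] <;> ring
  have hupper := (abs_le.1 (hf x fun n => x n - δ * u n)).2
  rw [hlin, hquad] at hupper
  linarith

end CoordwiseSmooth

section CondExp

variable {Ω : Type*} {m m₀ : MeasurableSpace Ω} {μ : Measure[m₀] Ω}

lemma setIntegral_le_of_condExp_indicator_le [IsFiniteMeasure μ] (hm : m ≤ m₀) {g : Ω → ℝ}
    {s : Set Ω} {c : ℝ} (hg : StronglyMeasurable[m] g) (hg0 : 0 ≤ g) (hgi : Integrable g μ)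
    (hs : MeasurableSet[m₀] s) (hc : μ[s.indicator (fun _ => (1 : ℝ)) | m] ≤ᵐ[μ] fun _ => c) :
    ∫ ω in s, g ω ∂μ ≤ c * ∫ ω, g ω ∂μ := by
  have : IsFiniteMeasure (μ.trim hm) := isFiniteMeasure_trim hm
  have hind : Integrable (s.indicator fun _ => (1 : ℝ)) μ := (integrable_const 1).indicator hs
  have hmul : g * s.indicator (fun _ => (1 : ℝ)) = s.indicator g := by
    ext ω
    simp only [Pi.mul_apply, ← Set.indicator_mul_right, mul_one]
  have hpull :
      μ[g * s.indicator (fun _ => (1 : ℝ)) | m] =ᵐ[μ] g * μ[s.indicator (fun _ => 1) | m] :=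
    condExp_mul_of_stronglyMeasurable_left hg (hmul ▸ hgi.indicator hs) hind
  calc ∫ ω in s, g ω ∂μ = ∫ ω, (g * s.indicator (fun _ => (1 : ℝ))) ω ∂μ := by
        rw [hmul, integral_indicator hs]
    _ = ∫ ω, (μ[g * s.indicator (fun _ => (1 : ℝ)) | m]) ω ∂μ := (integral_condExp hm).symm
    _ = ∫ ω, g ω * (μ[s.indicator (fun _ => (1 : ℝ)) | m]) ω ∂μ := integral_congr_ae hpull
    _ ≤ ∫ ω, c * g ω ∂μ := by
        refine integral_mono_ae (integrable_condExp.congr hpull) (hgi.const_mul c) ?_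
        filter_upwards [hc] with ω hω
        rw [mul_comm c]
        exact mul_le_mul_of_nonneg_left hω (hg0 ω)
    _ = c * ∫ ω, g ω ∂μ := integral_const_mul c g

end CondExp

section SignStep

variable {ι Ω : Type*} [MeasurableSpace Ω] {μ : Measure Ω}
  {G : (ι → ℝ) → ι → ℝ} {X U : Ω → ι → ℝ}

def signErrorSet (G : (ι → ℝ) → ι → ℝ) (X U : Ω → ι → ℝ) (n : ι) : Set Ω :=
  {ω | Real.sign (G (X ω) n) ≠ U ω n}

lemma measurableSet_signErrorSet {n : ι} (hG : Measurable fun v => G v n) (hX : Measurable X)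
    (hU : Measurable U) : MeasurableSet (signErrorSet G X U n) :=
  (measurableSet_eq_fun (Real.measurable_sign.comp (hG.comp hX))
    ((measurable_pi_apply n).comp hU)).compl

lemma integral_sum_indicator_signErrorSet_le [Fintype ι] [IsFiniteMeasure μ] {PE : ℝ}
    (hG : ∀ n, Measurable fun v => G v n) (hX : Measurable X) (hU : Measurable U)
    (hg : ∀ n, Integrable (fun ω => |G (X ω) n|) μ)
    (herr : ∀ n, μ[(signErrorSet G X U n).indicator (fun _ => (1 : ℝ)) |
      MeasurableSpace.comap X inferInstance] ≤ᵐ[μ] fun _ => PE) :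
    ∫ ω, ∑ n, (signErrorSet G X U n).indicator (fun ω => |G (X ω) n|) ω ∂μ
      ≤ PE * ∫ ω, ∑ n, |G (X ω) n| ∂μ := by
  have hE := fun n => measurableSet_signErrorSet (hG n) hX hU
  rw [integral_finsetSum _ fun n _ => (hg n).indicator (hE n),
    integral_finsetSum _ fun n _ => hg n, Finset.mul_sum]
  refine Finset.sum_le_sum fun n _ => ?_
  rw [integral_indicator (hE n)]
  exact setIntegral_le_of_condExp_indicator_le hX.comap_le
    ((hG n).abs.comp (comap_measurable X)).stronglyMeasurable (fun ω => abs_nonneg _) (hg n)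
    (hE n) (herr n)

lemma CoordwiseSmoothWith.integral_signStep_le [Fintype ι] [IsProbabilityMeasure μ] {L : ι → ℝ}
    {f : (ι → ℝ) → ℝ} (hf : CoordwiseSmoothWith L f G) {X' : Ω → ι → ℝ} {δ PE : ℝ}
    (hδ : 0 ≤ δ) (hX : Measurable X) (hU : Measurable U)
    (hUval : ∀ ω n, U ω n = 1 ∨ U ω n = -1) (hstep : X' = fun ω n => X ω n - δ * U ω n)
    (hfX : Integrable (fun ω => f (X ω)) μ) (hfX' : Integrable (fun ω => f (X' ω)) μ)
    (hgX : Integrable (fun ω => ∑ n, |G (X ω) n|) μ)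
    (herr : ∀ n, μ[(signErrorSet G X U n).indicator (fun _ => (1 : ℝ)) |
      MeasurableSpace.comap X inferInstance] ≤ᵐ[μ] fun _ => PE) :
    ∫ ω, f (X' ω) ∂μ ≤ ∫ ω, f (X ω) ∂μ - δ * (1 - 2 * PE) * ∫ ω, ∑ n, |G (X ω) n| ∂μ
      + δ ^ 2 * (∑ n, L n) / 2 := by
  set E := signErrorSet G X U
  have hg : ∀ n, Integrable (fun ω => |G (X ω) n|) μ := fun n =>
    hgX.mono' ((hf.measurable_apply n).comp hX).abs.aestronglyMeasurable
      (Eventually.of_forall fun ω => by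
        simpa only [Real.norm_eq_abs, abs_abs] using
          Finset.single_le_sum (f := fun m => |G (X ω) m|) (fun m _ => abs_nonneg _)
            (Finset.mem_univ n))
  have hdescent : Integrable (fun ω => f (X ω) - δ * ∑ n, |G (X ω) n|) μ :=
    hfX.sub (hgX.const_mul δ)
  have herrsum : Integrable (fun ω => 2 * δ * ∑ n, (E n).indicator (fun ω => |G (X ω) n|) ω) μ :=
    (integrable_finsetSum _ fun n _ => (hg n).indicator
      (measurableSet_signErrorSet (hf.measurable_apply n) hX hU)).const_mul _
  have hrhs : Integrable (fun ω => f (X ω) - δ * ∑ n, |G (X ω) n|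
      + 2 * δ * ∑ n, (E n).indicator (fun ω => |G (X ω) n|) ω) μ := hdescent.add herrsum
  have hpoint : ∀ ω, f (X' ω) ≤ f (X ω) - δ * ∑ n, |G (X ω) n|
      + 2 * δ * ∑ n, (E n).indicator (fun ω => |G (X ω) n|) ω + δ ^ 2 * (∑ n, L n) / 2 :=
    fun ω => by
      rw [hstep]
      simpa only [Set.indicator_apply, E, signErrorSet, Set.mem_ofPred_eq] using
        hf.apply_signStep_le δ (hUval ω)
  have herrE := integral_sum_indicator_signErrorSet_le hf.measurable_apply hX hU hg herr
  calc ∫ ω, f (X' ω) ∂μ ≤ ∫ ω, (f (X ω) - δ * ∑ n, |G (X ω) n|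
        + 2 * δ * ∑ n, (E n).indicator (fun ω => |G (X ω) n|) ω + δ ^ 2 * (∑ n, L n) / 2) ∂μ :=
        integral_mono hfX' (hrhs.add (integrable_const _)) hpoint
    _ = ∫ ω, f (X ω) ∂μ - δ * ∫ ω, ∑ n, |G (X ω) n| ∂μ
        + 2 * δ * ∫ ω, ∑ n, (E n).indicator (fun ω => |G (X ω) n|) ω ∂μ
        + δ ^ 2 * (∑ n, L n) / 2 := by
        rw [integral_add hrhs (integrable_const _), integral_add hdescent herrsum,
          integral_sub hfX (hgX.const_mul δ), integral_const_mul, integral_const_mul,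
          integral_const, probReal_univ, one_smul]
    _ ≤ ∫ ω, f (X ω) ∂μ - δ * (1 - 2 * PE) * ∫ ω, ∑ n, |G (X ω) n| ∂μ
        + δ ^ 2 * (∑ n, L n) / 2 := by
        nlinarith [mul_le_mul_of_nonneg_left herrE (by positivity : (0 : ℝ) ≤ 2 * δ)]

end SignStep

lemma sum_Icc_le_of_le_sub {a b : ℕ → ℝ} {c : ℝ} {T : ℕ}
    (h : ∀ t ∈ Finset.Icc 1 T, a (t + 1) ≤ a t - b t + c) :
    ∑ t ∈ Finset.Icc 1 T, b t ≤ a 1 - a (T + 1) + T * c := by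
  induction T with
  | zero => simp
  | succ T ih =>
    have hlast := h (T + 1) (Finset.mem_Icc.2 ⟨by omega, le_rfl⟩)
    have hprev := ih fun t ht => h t (Finset.Icc_subset_Icc_right (Nat.le_succ T) ht)
    rw [Finset.sum_Icc_succ_top (by omega)]
    push_cast
    linarith

/-- The step size `δ = √(2A/(TS))` is the one for which `T δ² S / 2 = A`. -/
lemma inv_mul_le_of_stepSize_eq_sqrt {A S T c δ I : ℝ} (hA : 0 < A) (hS : 0 < S) (hT : 0 < T)
    (hc : 0 < c) (hδ : δ = √(2 * A / (T * S))) (h : c * δ * I ≤ A + T * (δ ^ 2 * S / 2)) :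
    1 / T * I ≤ 1 / c * √(2 * A * S / T) := by
  have hδpos : 0 < δ := hδ ▸ Real.sqrt_pos.2 (by positivity)
  have hbudget : T * (δ ^ 2 * S / 2) = A := by
    rw [hδ, Real.sq_sqrt (by positivity)]
    field_simp
  have hsqrt : √(2 * A * S / T) = δ * S := by
    rw [show 2 * A * S / T = 2 * A / (T * S) * S ^ 2 by field_simp,
      Real.sqrt_mul (by positivity), Real.sqrt_sq hS.le, hδ]
  rw [hsqrt, one_div_mul_eq_div, one_div_mul_eq_div, div_le_div_iff₀ hT hc]
  exact le_of_mul_le_mul_left (by nlinarith) hδpos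

theorem signSGD_universal_convergence_general {Ω : Type*} [MeasurableSpace Ω]
    (μ : Measure Ω) [IsProbabilityMeasure μ] (N T : ℕ) (hT : 1 ≤ T)
    (f : (Fin N → ℝ) → ℝ) (G : (Fin N → ℝ) → (Fin N → ℝ))
    (L : Fin N → ℝ) (hLpos : 0 < ∑ n, L n)
    (fstar : ℝ) (hlb : ∀ x, fstar ≤ f x)
    (hsmooth : ∀ x y : Fin N → ℝ,
      |f y - f x - ∑ n, G x n * (y n - x n)| ≤ ∑ n, L n / 2 * (y n - x n) ^ 2)
    (x : ℕ → Ω → Fin N → ℝ) (U : ℕ → Ω → Fin N → ℝ)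
    (x1 : Fin N → ℝ) (hx1 : x 1 = fun _ => x1) (hpos : fstar < f x1)
    (δ PE : ℝ) (hPE : PE < 1/2)
    (hδ : δ = Real.sqrt (2 * (f x1 - fstar) / ((T : ℝ) * ∑ n, L n)))
    (hupd : ∀ t ∈ Finset.Icc 1 T, x (t + 1) = fun ω n => x t ω n - δ * U t ω n)
    (hxmeas : ∀ t, Measurable (x t)) (hUmeas : ∀ t, Measurable (U t))
    (hUval : ∀ t ω n, U t ω n = 1 ∨ U t ω n = -1)
    (hfint : ∀ t, Integrable (fun ω => f (x t ω)) μ)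
    (hgint : ∀ t, Integrable (fun ω => ∑ n, |G (x t ω) n|) μ)
    (herr : ∀ t ∈ Finset.Icc 1 T, ∀ n : Fin N,
      μ[Set.indicator {ω | Real.sign (G (x t ω) n) ≠ U t ω n}
          (fun _ => (1:ℝ)) |
          MeasurableSpace.comap (x t) inferInstance] ≤ᵐ[μ] fun _ => PE) :
    ∫ ω, (1 / (T : ℝ)) * ∑ t ∈ Finset.Icc 1 T, ∑ n, |G (x t ω) n| ∂μ ≤
      (1 / (1 - 2 * PE)) *
        Real.sqrt (2 * (f x1 - fstar) * (∑ n, L n) / (T : ℝ)) := by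
  have hδ0 : 0 ≤ δ := hδ ▸ Real.sqrt_nonneg _
  have hdescent : ∀ t ∈ Finset.Icc 1 T, ∫ ω, f (x (t + 1) ω) ∂μ ≤ ∫ ω, f (x t ω) ∂μ
      - δ * (1 - 2 * PE) * ∫ ω, ∑ n, |G (x t ω) n| ∂μ + δ ^ 2 * (∑ n, L n) / 2 := fun t ht =>
    CoordwiseSmoothWith.integral_signStep_le hsmooth hδ0 (hxmeas t) (hUmeas t) (hUval t)
      (hupd t ht) (hfint t) (hfint (t + 1)) (hgint t) (herr t ht)
  have htel := sum_Icc_le_of_le_sub (a := fun t => ∫ ω, f (x t ω) ∂μ)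
    (b := fun t => δ * (1 - 2 * PE) * ∫ ω, ∑ n, |G (x t ω) n| ∂μ) hdescent
  have hstart : ∫ ω, f (x 1 ω) ∂μ = f x1 := by simp [hx1]
  have hend : fstar ≤ ∫ ω, f (x (T + 1) ω) ∂μ := by
    simpa using integral_mono (integrable_const fstar) (hfint (T + 1)) fun ω => hlb _
  rw [integral_const_mul, integral_finsetSum _ fun t _ => hgint t]
  refine inv_mul_le_of_stepSize_eq_sqrt (sub_pos.2 hpos) hLpos (Nat.cast_pos.2 hT)
    (by linarith) hδ ?_
  rw [← Finset.mul_sum] at htel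
  linarith

/-- Universal convergence rate of signSGD with an arbitrary binary aggregation
    rule: if at every iteration each coordinate's gradient sign is decoded
    wrongly with conditional probability at most `P_E < 1/2` given the current
    iterate, then with step size `δ = √(2(f(x¹)-f*)/(T‖L‖₁))`,
    `E[(1/T) Σ_t ‖∇f(xᵗ)‖₁] ≤ (1/(1-2P_E)) √(2(f(x¹)-f*)‖L‖₁/T)`. -/
theorem signSGD_universal_convergence {Ω : Type*} [MeasurableSpace Ω]
    (μ : Measure Ω) [IsProbabilityMeasure μ] (N T : ℕ) (hT : 1 ≤ T)
    (f : (Fin N → ℝ) → ℝ) (G : (Fin N → ℝ) → (Fin N → ℝ))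
    (L : Fin N → ℝ) (hL : ∀ n, 0 ≤ L n) (hLpos : 0 < ∑ n, L n)
    (fstar : ℝ) (hlb : ∀ x, fstar ≤ f x)
    (hsmooth : ∀ x y : Fin N → ℝ,
      |f y - f x - ∑ n, G x n * (y n - x n)| ≤ ∑ n, L n / 2 * (y n - x n) ^ 2)
    (x : ℕ → Ω → Fin N → ℝ) (U : ℕ → Ω → Fin N → ℝ)
    (x1 : Fin N → ℝ) (hx1 : x 1 = fun _ => x1) (hpos : fstar < f x1)
    (δ PE : ℝ) (hPE : PE < 1/2)
    (hδ : δ = Real.sqrt (2 * (f x1 - fstar) / ((T : ℝ) * ∑ n, L n)))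
    (hupd : ∀ t ∈ Finset.Icc 1 T, x (t + 1) = fun ω n => x t ω n - δ * U t ω n)
    (hxmeas : ∀ t, Measurable (x t)) (hUmeas : ∀ t, Measurable (U t))
    (hUval : ∀ t ω n, U t ω n = 1 ∨ U t ω n = -1)
    (hfint : ∀ t, Integrable (fun ω => f (x t ω)) μ)
    (hgint : ∀ t, Integrable (fun ω => ∑ n, |G (x t ω) n|) μ)
    (herr : ∀ t ∈ Finset.Icc 1 T, ∀ n : Fin N,
      μ[Set.indicator {ω | Real.sign (G (x t ω) n) ≠ U t ω n}
          (fun _ => (1:ℝ)) |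
          MeasurableSpace.comap (x t) inferInstance] ≤ᵐ[μ] fun _ => PE) :
    ∫ ω, (1 / (T : ℝ)) * ∑ t ∈ Finset.Icc 1 T, ∑ n, |G (x t ω) n| ∂μ ≤
      (1 / (1 - 2 * PE)) *
        Real.sqrt (2 * (f x1 - fstar) * (∑ n, L n) / (T : ℝ)) :=
  signSGD_universal_convergence_general μ N T hT f G L hLpos fstar hlb hsmooth x U x1 hx1 hpos δ PE
    hPE hδ hupd hxmeas hUmeas hUval hfint hgint herr
end

section
/- Let Z_1,…,Z_M be independent Bernoulli random variables with parameters p_m ∈ (0,1), and let p̄ = (1/M)·Σ_m p_m < 1/2. Then P[ Σ_{m=1}^M Z_m ≥ M/2 ] ≤ (2·p̄·exp(1 - 2·p̄))^{M/2}. -/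
/-!
Chernoff's method. A `{0,1}`-valued variable of mean `p` has moment generating function
`1 + (eᵗ - 1) p ≤ exp ((eᵗ - 1) p)`, so by independence the sum `S` of the votes satisfies
`P[S ≥ a] ≤ exp (-t a + (eᵗ - 1) s)` with `s = Σ pₘ`. The choice `eᵗ = a / s` gives
`P[S ≥ a] ≤ (s / a)ᵃ e^{a - s}`, and `a = M/2`, `s = M p̄` turn this into
`(2 p̄ e^{1 - 2p̄})^{M/2}`.
-/

open MeasureTheory ProbabilityTheory Real

namespace ProbabilityTheory

variable {Ω : Type*} [MeasurableSpace Ω] {μ : Measure Ω}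

lemma mgf_of_zero_or_one [IsProbabilityMeasure μ] {X : Ω → ℝ} {p : ℝ} (hX : Measurable X)
    (hval : ∀ ω, X ω = 0 ∨ X ω = 1) (hp : 0 ≤ p)
    (hX1 : μ {ω | X ω = 1} = ENNReal.ofReal p) (t : ℝ) : mgf X μ t = 1 + (exp t - 1) * p := by
  have hS : MeasurableSet {ω | X ω = 1} := hX (measurableSet_singleton 1)
  have hexp : (fun ω ↦ exp (t * X ω)) =
      fun ω ↦ 1 + {ω | X ω = 1}.indicator (fun _ ↦ exp t - 1) ω := by
    funext ω
    rcases hval ω with h | h <;> simp [h]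
  rw [mgf, hexp, integral_add (integrable_const 1) ((integrable_const _).indicator hS),
    integral_indicator_const _ hS, measureReal_def, hX1, ENNReal.toReal_ofReal hp]
  simp [mul_comm]

variable {ι : Type*} [Fintype ι] {X : ι → Ω → ℝ} {p : ι → ℝ}

lemma measureReal_sum_ge_le_exp_of_zero_or_one (hmeas : ∀ i, Measurable (X i))
    (hval : ∀ i ω, X i ω = 0 ∨ X i ω = 1) (hp : ∀ i, 0 ≤ p i)
    (hBern : ∀ i, μ {ω | X i ω = 1} = ENNReal.ofReal (p i)) (hindep : iIndepFun X μ)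
    (a : ℝ) {t : ℝ} (ht : 0 ≤ t) :
    μ.real {ω | a ≤ ∑ i, X i ω} ≤ exp (-t * a + (exp t - 1) * ∑ i, p i) := by
  have := hindep.isProbabilityMeasure
  have hint : Integrable (fun ω ↦ exp (t * (∑ i, X i) ω)) μ :=
    hindep.integrable_exp_mul_sum hmeas fun i _ ↦ integrable_exp_mul_of_le t 1 ht
      (hmeas i).aemeasurable (ae_of_all _ fun ω ↦ by rcases hval i ω with h | h <;> simp [h])
  have hchernoff := measure_ge_le_exp_mul_mgf a ht hint
  rw [hindep.mgf_sum hmeas] at hchernoff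
  simp only [Finset.sum_apply] at hchernoff
  calc μ.real {ω | a ≤ ∑ i, X i ω}
      ≤ exp (-t * a) * ∏ i, (1 + (exp t - 1) * p i) := by
        simpa only [mgf_of_zero_or_one (hmeas _) (hval _) (hp _) (hBern _)] using hchernoff
    _ ≤ exp (-t * a) * exp (∑ i, (exp t - 1) * p i) := by
        gcongr
        exact prod_one_add_le_exp_sum _ fun i ↦ mul_nonneg (sub_nonneg.2 (one_le_exp ht)) (hp i)
    _ = exp (-t * a + (exp t - 1) * ∑ i, p i) := by rw [← exp_add, Finset.mul_sum]

lemma measureReal_sum_ge_le_rpow_mul_exp_of_zero_or_one (hmeas : ∀ i, Measurable (X i))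
    (hval : ∀ i ω, X i ω = 0 ∨ X i ω = 1) (hp : ∀ i, 0 ≤ p i)
    (hBern : ∀ i, μ {ω | X i ω = 1} = ENNReal.ofReal (p i)) (hindep : iIndepFun X μ)
    {a : ℝ} (hs : 0 < ∑ i, p i) (ha : ∑ i, p i ≤ a) :
    μ.real {ω | a ≤ ∑ i, X i ω} ≤ ((∑ i, p i) / a) ^ a * exp (a - ∑ i, p i) := by
  have ha₀ : 0 < a := hs.trans_le ha
  have ht : 0 ≤ log (a / ∑ i, p i) := log_nonneg ((one_le_div hs).2 ha)
  convert measureReal_sum_ge_le_exp_of_zero_or_one hmeas hval hp hBern hindep a ht using 1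
  rw [exp_log (by positivity), rpow_def_of_pos (by positivity), ← exp_add, ← log_inv, inv_div]
  congr 1
  field_simp

end ProbabilityTheory

/-- Majority-vote decoding error bound: for independent Bernoulli(p_m)
    variables with average parameter `p̄ < 1/2`,
    `P[Σ Z_m ≥ M/2] ≤ (2 p̄ e^{1-2p̄})^{M/2}`. -/
theorem mv_decoding_error_bound {Ω : Type*} [MeasurableSpace Ω]
    (μ : Measure Ω) [IsProbabilityMeasure μ] (M : ℕ)
    (Z : Fin M → Ω → ℝ) (p : Fin M → ℝ)
    (hp : ∀ m, 0 < p m ∧ p m < 1)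
    (hpbar : (1 / (M : ℝ)) * ∑ m, p m < 1/2)
    (hmeas : ∀ m, Measurable (Z m))
    (hval : ∀ m ω, Z m ω = 0 ∨ Z m ω = 1)
    (hBern : ∀ m, μ {ω | Z m ω = 1} = ENNReal.ofReal (p m))
    (hindep : iIndepFun Z μ) :
    μ {ω | (M : ℝ) / 2 ≤ ∑ m, Z m ω} ≤
      ENNReal.ofReal
        ((2 * ((1 / (M : ℝ)) * ∑ m, p m) *
            Real.exp (1 - 2 * ((1 / (M : ℝ)) * ∑ m, p m))) ^ ((M : ℝ) / 2)) := by
  rcases Nat.eq_zero_or_pos M with rfl | hM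
  · simp
  set q := (1 / (M : ℝ)) * ∑ m, p m
  have hsum : ∑ m, p m = M * q := by simp only [q]; field_simp
  have hs : 0 < ∑ m, p m := Finset.sum_pos (fun m _ ↦ (hp m).1) ⟨⟨0, hM⟩, Finset.mem_univ _⟩
  have hbound := measureReal_sum_ge_le_rpow_mul_exp_of_zero_or_one hmeas hval
    (fun m ↦ (hp m).1.le) hBern hindep hs (a := M / 2) (by rw [hsum]; nlinarith)
  rw [ENNReal.le_ofReal_iff_toReal_le (measure_ne_top _ _) (by positivity)]
  refine hbound.trans_eq ?_
  rw [hsum, mul_rpow (by positivity) (exp_nonneg _), ← exp_mul]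
  congr 1
  · field_simp
  · congr 1; ring
end
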